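/- arXiv:2604.13524 — 2 statements merged into one kernel-verified Lean document; each statement's English description precedes it below -/
import Mathlib

section
/- Let ε ∈ [0,1), M > 1, and let 𝓟 and 𝓔 be sets of density matrices on ℂ^d such that conv(𝓟) ∩ aff(𝓔) ≠ ∅. Then there exists a linear map L from d×d complex matrices to 2×2 complex matrices satisfying T(L(ρ), |1⟩⟨1|) ≤ ε for all ρ ∈ 𝓟 and L(τ) = π_M for all τ ∈ 𝓔, if and only if ε ≥ 1 − 1/M. -/
open Matrix ComplexOrder

/-- Trace norm of a complex matrix: the trace of `sqrt(AᴴA)` (sum of singular values). -/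
noncomputable def traceNorm {n : Type*} [Fintype n] [DecidableEq n]
    (A : Matrix n n ℂ) : ℝ :=
  (((Matrix.posSemidef_conjTranspose_mul_self A).1.eigenvectorUnitary.1 *
      diagonal (((↑) : ℝ → ℂ) ∘ (√·) ∘ (Matrix.posSemidef_conjTranspose_mul_self A).1.eigenvalues) *
      (star (Matrix.posSemidef_conjTranspose_mul_self A).1.eigenvectorUnitary :
        Matrix n n ℂ)).trace).re

/-- Trace distance `T(X,Y) = ‖X - Y‖₁ / 2`. -/
noncomputable def traceDist {n : Type*} [Fintype n] [DecidableEq n]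
    (X Y : Matrix n n ℂ) : ℝ :=
  traceNorm (X - Y) / 2

/-- A density matrix: positive semidefinite with unit trace. -/
def IsDensityMatrix {n : Type*} [Fintype n] (ρ : Matrix n n ℂ) : Prop :=
  ρ.PosSemidef ∧ ρ.trace = 1

/-- The battery Gibbs state `π_M = diag(1 - 1/M, 1/M)`. -/
noncomputable def piM (M : ℝ) : Matrix (Fin 2) (Fin 2) ℂ :=
  Matrix.diagonal ![((1 - 1/M : ℝ) : ℂ), ((1/M : ℝ) : ℂ)]

/-- The excited battery state `|1⟩⟨1| = diag(0,1)`. -/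
def ket1 : Matrix (Fin 2) (Fin 2) ℂ :=
  Matrix.diagonal ![0, 1]

/-- A test (POVM effect): `0 ≤ E ≤ I`. -/
def IsTest {n : Type*} [Fintype n] [DecidableEq n] (E : Matrix n n ℂ) : Prop :=
  E.PosSemidef ∧ (1 - E).PosSemidef

/-- Choi matrix `Σ_{ij} E_{ij} ⊗ F(E_{ij})` of a linear map on matrices. -/
noncomputable def choiMatrix {n m : Type*} [Fintype n] [DecidableEq n] [Fintype m]
    (F : Matrix n n ℂ →ₗ[ℂ] Matrix m m ℂ) :
    Matrix (n × m) (n × m) ℂ :=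
  fun p q => F (Matrix.single p.1 q.1 1) p.2 q.2

/-- Completely positive (positive semidefinite Choi matrix) and trace preserving. -/
def IsCPTP {n m : Type*} [Fintype n] [DecidableEq n] [Fintype m]
    (F : Matrix n n ℂ →ₗ[ℂ] Matrix m m ℂ) : Prop :=
  (choiMatrix F).PosSemidef ∧ ∀ X, (F X).trace = X.trace

/-- `n`-fold Kronecker (tensor) power of a `2 × 2` matrix, indexed by bit strings. -/
def tensPow (A : Matrix (Fin 2) (Fin 2) ℂ) (n : ℕ) :
    Matrix (Fin n → Fin 2) (Fin n → Fin 2) ℂ :=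
  fun x y => ∏ i, A (x i) (y i)

/-- `ε`-ball (in trace distance) of density matrices around a set `𝓟`. -/
noncomputable def metBall {n : Type*} [Fintype n] [DecidableEq n]
    (ε : ℝ) (P : Set (Matrix n n ℂ)) : Set (Matrix n n ℂ) :=
  {ω | IsDensityMatrix ω ∧ ∃ ρ ∈ P, traceDist ω ρ ≤ ε}


/-
For a `2 × 2` matrix, `‖X‖₁² = ‖X‖₂² + 2 |det X|`, which gives `|X₀₀ - X₁₁| ≤ ‖X‖₁`. Hence the
real-linear functional `φ = Re (L(·)₁₁ - L(·)₀₀)` is at least `1 - 2ε` on `𝓟`, and so on `conv 𝓟`.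
On `aff 𝓔` the map `L` is constantly `π_M`, where `φ = 2/M - 1`; a point of the intersection
gives `ε ≥ 1 - 1/M`. Conversely `X ↦ tr X • π_M` works, since `T(π_M, |1⟩⟨1|) = 1 - 1/M`.
-/

open scoped MatrixOrder

section TraceNorm

variable {n : Type*} [Fintype n] [DecidableEq n]

lemma traceNorm_eq_re_trace_abs (A : Matrix n n ℂ) : traceNorm A = (CFC.abs A).trace.re := by
  have hA := posSemidef_conjTranspose_mul_self A
  rw [CFC.abs, CFC.sqrt_eq_real_sqrt _ (star_mul_self_nonneg A), cfcₙ_eq_cfc (hf0 := by simp),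
    star_eq_conjTranspose, hA.1.cfc_eq, IsHermitian.cfc, Unitary.conjStarAlgAut_apply]
  rfl

lemma trace_abs_eq_traceNorm (A : Matrix n n ℂ) : (CFC.abs A).trace = traceNorm A := by
  rw [traceNorm_eq_re_trace_abs]
  exact Complex.eq_re_of_ofReal_le (CFC.abs_nonneg A).posSemidef.trace_nonneg

lemma traceNorm_nonneg (A : Matrix n n ℂ) : 0 ≤ traceNorm A := by
  have h := (CFC.abs_nonneg A).posSemidef.trace_nonneg
  rwa [trace_abs_eq_traceNorm, Complex.zero_le_real] at h

lemma det_abs_eq_norm_det (A : Matrix n n ℂ) : (CFC.abs A).det = ‖A.det‖ := by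
  have hdet : (star A * A).det = ((‖A.det‖ ^ 2 : ℝ) : ℂ) := by
    rw [det_mul, star_eq_conjTranspose, det_conjTranspose, Complex.star_def, Complex.conj_mul']
    push_cast
    rfl
  rw [CFC.abs, star_eq_conjTranspose, (posSemidef_conjTranspose_mul_self A).det_sqrt,
    ← star_eq_conjTranspose, hdet, RCLike.sqrt_of_nonneg (by positivity)]
  simp [-Complex.ofReal_pow]

end TraceNorm

lemma re_trace_conjTranspose_mul_self {m n : Type*} [Fintype m] [Fintype n] (A : Matrix m n ℂ) :
    (Aᴴ * A).trace.re = ∑ i, ∑ j, ‖A i j‖ ^ 2 := by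
  rw [Finset.sum_comm]
  simp [trace, mul_apply, Complex.conj_mul', ← Complex.ofReal_pow]

lemma trace_sq_fin_two {R : Type*} [CommRing R] (S : Matrix (Fin 2) (Fin 2) R) :
    S.trace ^ 2 = (S * S).trace + 2 * S.det := by
  simp only [trace_fin_two, det_fin_two, mul_apply, Fin.sum_univ_two]
  ring

lemma traceNorm_sq_fin_two (A : Matrix (Fin 2) (Fin 2) ℂ) :
    traceNorm A ^ 2 = (Aᴴ * A).trace.re + 2 * ‖A.det‖ := by
  have h := congrArg Complex.re (trace_sq_fin_two (CFC.abs A))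
  rw [CFC.abs_mul_abs, trace_abs_eq_traceNorm, det_abs_eq_norm_det, star_eq_conjTranspose] at h
  simpa [← Complex.ofReal_pow] using h

lemma norm_sub_le_traceNorm_fin_two (A : Matrix (Fin 2) (Fin 2) ℂ) :
    ‖A 0 0 - A 1 1‖ ≤ traceNorm A := by
  have hdet : ‖A 0 0‖ * ‖A 1 1‖ ≤ ‖A.det‖ + ‖A 0 1‖ * ‖A 1 0‖ := by
    rw [det_fin_two, ← norm_mul, ← norm_mul]
    linarith [norm_le_norm_add_norm_sub' (A 0 0 * A 1 1) (A 0 1 * A 1 0)]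
  have hsq : ‖A 0 0 - A 1 1‖ ^ 2 ≤ traceNorm A ^ 2 := by
    rw [traceNorm_sq_fin_two, re_trace_conjTranspose_mul_self]
    simp only [Fin.sum_univ_two]
    nlinarith [norm_sub_le (A 0 0) (A 1 1), norm_nonneg (A 0 0 - A 1 1),
      sq_nonneg (‖A 0 1‖ - ‖A 1 0‖)]
  exact (pow_le_pow_iff_left₀ (norm_nonneg _) (traceNorm_nonneg A) two_ne_zero).mp hsq

lemma traceNorm_diagonal_fin_two (a b : ℝ) :
    traceNorm (diagonal ![(a : ℂ), (b : ℂ)]) = |a| + |b| := by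
  have h := traceNorm_sq_fin_two (diagonal ![(a : ℂ), (b : ℂ)])
  rw [← pow_left_inj₀ (traceNorm_nonneg _) (by positivity) two_ne_zero, h,
    re_trace_conjTranspose_mul_self, det_diagonal]
  simp only [Fin.sum_univ_two, Fin.prod_univ_two, diagonal_apply, zero_ne_one, one_ne_zero,
    ↓reduceIte, cons_val_zero, cons_val_one, cons_val_fin_one, norm_zero, norm_mul,
    Complex.norm_real, Real.norm_eq_abs]
  ring

lemma traceDist_piM_ket1 (M : ℝ) : traceDist (piM M) ket1 = |1 - 1 / M| := by
  have h : piM M - ket1 = diagonal ![((1 - 1 / M : ℝ) : ℂ), ((1 / M - 1 : ℝ) : ℂ)] := by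
    rw [piM, ket1, diagonal_sub]
    congr 1
    ext i
    fin_cases i <;> simp
  rw [traceDist, h, traceNorm_diagonal_fin_two, abs_sub_comm (1 / M)]
  ring

lemma one_sub_two_mul_traceDist_ket1_le (X : Matrix (Fin 2) (Fin 2) ℂ) :
    1 - 2 * traceDist X ket1 ≤ (X 1 1 - X 0 0).re := by
  have h := (Complex.re_le_norm _).trans (norm_sub_le_traceNorm_fin_two (X - ket1))
  have hentries : (X - ket1) 0 0 - (X - ket1) 1 1 = X 0 0 - X 1 1 + 1 := by
    simp only [ket1, Matrix.sub_apply, diagonal_apply_eq, cons_val_zero, cons_val_one, cons_val_fin_one]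
    ring
  rw [hentries] at h
  simp only [Complex.add_re, Complex.sub_re, Complex.one_re] at h ⊢
  rw [traceDist]
  linarith

lemma one_sub_two_mul_le_re_sub_of_mem_convexHull {n : Type*}
    (L : Matrix n n ℂ →ₗ[ℂ] Matrix (Fin 2) (Fin 2) ℂ) {P : Set (Matrix n n ℂ)} {ε : ℝ}
    (hP : ∀ ρ ∈ P, traceDist (L ρ) ket1 ≤ ε) {σ : Matrix n n ℂ} (hσ : σ ∈ convexHull ℝ P) :
    1 - 2 * ε ≤ (L σ 1 1 - L σ 0 0).re := by
  let φ : Matrix n n ℂ →ₗ[ℝ] ℝ :=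
    Complex.reLm ∘ₗ ((entryLinearMap ℂ ℂ 1 1 - entryLinearMap ℂ ℂ 0 0) ∘ₗ L).restrictScalars ℝ
  have hφP : P ⊆ {X | 1 - 2 * ε ≤ φ X} := fun ρ hρ ↦
    (one_sub_two_mul_traceDist_ket1_le (L ρ)).trans' (by linarith [hP ρ hρ])
  exact convexHull_min hφP (convex_halfSpace_ge φ.isLinear _) hσ

lemma LinearMap.eq_const_of_mem_affineSpan {k E F : Type*} [Ring k] [AddCommGroup E] [Module k E]
    [AddCommGroup F] [Module k F] (f : E →ₗ[k] F) {s : Set E} {c : F} (hs : ∀ x ∈ s, f x = c)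
    {x : E} (hx : x ∈ affineSpan k s) : f x = c :=
  AffineMap.eqOn_affineSpan (f := f.toAffineMap) (g := AffineMap.const k E c) hs hx

theorem stmt_2_general {d : ℕ} (ε M : ℝ) (hM : 1 < M)
    (𝓟 𝓔 : Set (Matrix (Fin d) (Fin d) ℂ))
    (h𝓟 : ∀ ρ ∈ 𝓟, IsDensityMatrix ρ) (h𝓔 : ∀ τ ∈ 𝓔, IsDensityMatrix τ)
    (hgeo : (convexHull ℝ 𝓟 ∩
      (affineSpan ℝ 𝓔 : Set (Matrix (Fin d) (Fin d) ℂ))).Nonempty) :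
    (∃ L : Matrix (Fin d) (Fin d) ℂ →ₗ[ℂ] Matrix (Fin 2) (Fin 2) ℂ,
        (∀ ρ ∈ 𝓟, traceDist (L ρ) ket1 ≤ ε) ∧ (∀ τ ∈ 𝓔, L τ = piM M)) ↔
      ε ≥ 1 - 1/M := by
  constructor
  · rintro ⟨L, hL𝓟, hL𝓔⟩
    obtain ⟨σ, hσ𝓟, hσ𝓔⟩ := hgeo
    have hLσ : L σ = piM M := (L.restrictScalars ℝ).eq_const_of_mem_affineSpan hL𝓔 hσ𝓔
    have hσ := one_sub_two_mul_le_re_sub_of_mem_convexHull L hL𝓟 hσ𝓟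
    simp only [hLσ, piM, diagonal_apply_eq, cons_val_zero, cons_val_one, cons_val_fin_one,
      Complex.sub_re, Complex.ofReal_re] at hσ
    linarith
  · intro h
    have hpiM : traceDist (piM M) ket1 = 1 - 1 / M := by
      rw [traceDist_piM_ket1, abs_of_nonneg (sub_nonneg.2 (div_le_one_of_le₀ hM.le (by linarith)))]
    refine ⟨(traceLinearMap (Fin d) ℂ ℂ).smulRight (piM M), fun ρ hρ ↦ ?_, fun τ hτ ↦ ?_⟩
    · simpa [(h𝓟 ρ hρ).2, hpiM] using h
    · simp [(h𝓔 τ hτ).2]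

/-- no-go theorem for work extraction into a clean battery under
Gibbs-preserving linear maps. -/
theorem stmt_2 {d : ℕ} (ε M : ℝ) (hε : ε ∈ Set.Ico (0:ℝ) 1) (hM : 1 < M)
    (𝓟 𝓔 : Set (Matrix (Fin d) (Fin d) ℂ))
    (h𝓟 : ∀ ρ ∈ 𝓟, IsDensityMatrix ρ) (h𝓔 : ∀ τ ∈ 𝓔, IsDensityMatrix τ)
    (hgeo : (convexHull ℝ 𝓟 ∩
      (affineSpan ℝ 𝓔 : Set (Matrix (Fin d) (Fin d) ℂ))).Nonempty) :
    (∃ L : Matrix (Fin d) (Fin d) ℂ →ₗ[ℂ] Matrix (Fin 2) (Fin 2) ℂ,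
        (∀ ρ ∈ 𝓟, traceDist (L ρ) ket1 ≤ ε) ∧ (∀ τ ∈ 𝓔, L τ = piM M)) ↔
      ε ≥ 1 - 1/M :=
  stmt_2_general ε M hM 𝓟 𝓔 h𝓟 h𝓔 hgeo
end

section
/- Let n ≥ 2 be an integer, δ > 0, ε ∈ [0, 1/2), and M > 1. Then there is no linear map L from 2×2 complex matrices to 2^n×2^n complex matrices such that T(L(|1⟩⟨1|), |1⟩⟨1|^{⊗n}) ≤ ε and, for every M′ ∈ [M, ∞), there exists M″ ∈ [2, 2+δ] with L(π_{M′}) = π_{M″}^{⊗n}. (Consequently, the one-shot work cost of preparing the uncertain athermal state ({|1⟩⟨1|^{⊗n}}, {π_{M″}^{⊗n} : M″ ∈ [2,2+δ]}) from a dirty battery is infinite even at the level of Gibbs-preserving linear maps.) -/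
open Matrix ComplexOrder

/-!
On the pencil `M' ↦ π_{M'}`, which is affine in `1/M'`, the diagonal entries of `L(π_{M'})` at
bit strings with zero, one and two excitations are affine functions `a, b, c` of `1/M'`. As entries
`(1-s)ⁿ, s(1-s)ⁿ⁻¹, s²(1-s)ⁿ⁻²` of `π_{M''}^{⊗n}` (with `s = 1/M''`) they satisfy `a c = b²` at
three values of `1/M'`, which forces `a` and `b` to be proportional, hence `s` to be constant. So
`L` kills the direction `diag(-1, 1)` of the pencil and `L(|1⟩⟨1|) = L(π_1) = L(π_M) = π_{M''}^{⊗n}`,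
whose trace distance to `|1⟩⟨1|^{⊗n}` is `1 - sⁿ ≥ 1/2`.
-/

section PencilAlgebra

variable {R : Type*} [CommRing R] [IsDomain R]

theorem quadratic_coeffs_eq_zero_of_three_roots {α β γ t₁ t₂ t₃ : R}
    (h₁₂ : t₁ ≠ t₂) (h₁₃ : t₁ ≠ t₃) (h₂₃ : t₂ ≠ t₃)
    (h₁ : α + β * t₁ + γ * t₁ ^ 2 = 0) (h₂ : α + β * t₂ + γ * t₂ ^ 2 = 0)
    (h₃ : α + β * t₃ + γ * t₃ ^ 2 = 0) :
    α = 0 ∧ β = 0 ∧ γ = 0 := by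
  have e₁₂ : β + γ * (t₁ + t₂) = 0 :=
    (mul_eq_zero.1 (by linear_combination h₁ - h₂ : (t₁ - t₂) * (β + γ * (t₁ + t₂)) = 0)
      ).resolve_left (sub_ne_zero.2 h₁₂)
  have e₁₃ : β + γ * (t₁ + t₃) = 0 :=
    (mul_eq_zero.1 (by linear_combination h₁ - h₃ : (t₁ - t₃) * (β + γ * (t₁ + t₃)) = 0)
      ).resolve_left (sub_ne_zero.2 h₁₃)
  have hγ : γ = 0 :=
    (mul_eq_zero.1 (by linear_combination e₁₂ - e₁₃ : γ * (t₂ - t₃) = 0)).resolve_right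
      (sub_ne_zero.2 h₂₃)
  have hβ : β = 0 := by linear_combination e₁₂ - (t₁ + t₂) * hγ
  exact ⟨by linear_combination h₁ - t₁ * hβ - t₁ ^ 2 * hγ, hβ, hγ⟩

/-- A line lying on the cone `a c = b²` passes through its vertex. -/
theorem mul_eq_mul_of_affine_mul_eq_sq {a₀ a₁ b₀ b₁ c₀ c₁ t₁ t₂ t₃ : R}
    (h₁₂ : t₁ ≠ t₂) (h₁₃ : t₁ ≠ t₃) (h₂₃ : t₂ ≠ t₃)
    (h : ∀ t ∈ ({t₁, t₂, t₃} : Set R), (a₀ + t * a₁) * (c₀ + t * c₁) = (b₀ + t * b₁) ^ 2) :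
    a₀ * b₁ = a₁ * b₀ := by
  obtain ⟨hα, hβ, hγ⟩ := quadratic_coeffs_eq_zero_of_three_roots
    (α := a₀ * c₀ - b₀ ^ 2) (β := a₀ * c₁ + a₁ * c₀ - 2 * b₀ * b₁) (γ := a₁ * c₁ - b₁ ^ 2)
    h₁₂ h₁₃ h₂₃ (by linear_combination h t₁ (by simp)) (by linear_combination h t₂ (by simp))
    (by linear_combination h t₃ (by simp))
  have : (a₀ * b₁ - a₁ * b₀) ^ 2 = 0 := by
    linear_combination a₀ * a₁ * hβ - a₁ ^ 2 * hα - a₀ ^ 2 * hγ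
  exact sub_eq_zero.1 (pow_eq_zero_iff two_ne_zero |>.1 this)

end PencilAlgebra

open scoped MatrixOrder in
theorem traceNorm_diagonal_ofReal {ι : Type*} [Fintype ι] [DecidableEq ι] (f : ι → ℝ) :
    traceNorm (diagonal fun x => (f x : ℂ)) = ∑ x, |f x| := by
  set D := diagonal fun x => (f x : ℂ)
  set Dabs := diagonal fun x => ((|f x| : ℝ) : ℂ)
  have hDabs : Dabs.PosSemidef :=
    posSemidef_diagonal_iff.2 fun i => Complex.zero_le_real.2 (abs_nonneg (f i))
  have hsq : Dabs ^ 2 = Dᴴ * D := by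
    rw [pow_two, diagonal_conjTranspose, diagonal_mul_diagonal, diagonal_mul_diagonal]
    congr 1
    funext x
    simp only [Pi.star_apply, Complex.star_def, Complex.conj_ofReal]
    exact_mod_cast congrArg Complex.ofReal (abs_mul_abs_self (f x))
  have hDD := (posSemidef_conjTranspose_mul_self D).1
  have hnorm : traceNorm D = (cfc Real.sqrt (Dᴴ * D)).trace.re := by
    rw [hDD.cfc_eq, IsHermitian.cfc, Unitary.conjStarAlgAut_apply]
    rfl
  have hsqrt : cfc Real.sqrt (Dᴴ * D) = Dabs := by
    rw [← hsq, ← cfc_comp_pow (p := IsSelfAdjoint) Real.sqrt 2 Dabs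
      Real.continuous_sqrt.continuousOn hDabs.isHermitian,
      cfc_congr (g := fun x : ℝ => x)
        fun x hx => Real.sqrt_sq (spectrum_nonneg_of_nonneg hDabs.nonneg hx)]
    exact cfc_id' ℝ _ hDabs.isHermitian
  rw [hnorm, hsqrt, trace_diagonal]
  simp

theorem traceDist_diagonal_ofReal {ι : Type*} [Fintype ι] [DecidableEq ι] (f g : ι → ℝ) :
    traceDist (diagonal fun x => (f x : ℂ)) (diagonal fun x => (g x : ℂ))
      = (∑ x, |f x - g x|) / 2 := by
  rw [traceDist, diagonal_sub, ← traceNorm_diagonal_ofReal]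
  push_cast
  rfl

theorem sum_abs_sub_ite_eq {ι : Type*} [Fintype ι] [DecidableEq ι] {p : ι → ℝ}
    (hp : ∀ x, 0 ≤ p x) (hsum : ∑ x, p x = 1) (x₀ : ι) :
    ∑ x, |p x - if x = x₀ then 1 else 0| = 2 * (1 - p x₀) := by
  have hle : p x₀ ≤ 1 := hsum ▸ Finset.single_le_sum (fun x _ => hp x) (Finset.mem_univ x₀)
  have hrest : ∑ x ∈ Finset.univ.erase x₀, |p x - if x = x₀ then 1 else 0|
      = ∑ x ∈ Finset.univ.erase x₀, p x :=
    Finset.sum_congr rfl fun x hx => by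
      rw [if_neg (Finset.ne_of_mem_erase hx), sub_zero, abs_of_nonneg (hp x)]
  rw [← Finset.add_sum_erase _ _ (Finset.mem_univ x₀), hrest,
    Finset.sum_erase_eq_sub (Finset.mem_univ x₀), hsum, if_pos rfl, abs_of_nonpos (by linarith)]
  ring

theorem tensPow_diagonal_ofReal (n : ℕ) (v : Fin 2 → ℝ) :
    tensPow (diagonal fun j => (v j : ℂ)) n
      = diagonal fun x : Fin n → Fin 2 => ((∏ i, v (x i) : ℝ) : ℂ) := by
  ext x y
  rcases eq_or_ne x y with rfl | hxy
  · simp [tensPow]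
  · obtain ⟨i, hi⟩ := Function.ne_iff.1 hxy
    rw [diagonal_apply_ne _ hxy]
    exact Finset.prod_eq_zero (Finset.mem_univ i) (diagonal_apply_ne _ hi)

theorem piM_eq_diagonal_ofReal (M : ℝ) :
    piM M = diagonal fun j => ((![1 - 1 / M, 1 / M] j : ℝ) : ℂ) := by
  rw [piM]
  congr 1
  funext j
  fin_cases j <;> rfl

theorem ket1_eq_diagonal_ofReal : ket1 = diagonal fun j => ((![0, 1] j : ℝ) : ℂ) := by
  rw [ket1]
  congr 1
  funext j
  fin_cases j <;> simp

theorem prod_zero_one_eq_ite {n : ℕ} (x : Fin n → Fin 2) :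
    ∏ i, (![0, 1] : Fin 2 → ℝ) (x i) = if x = fun _ => 1 then 1 else 0 := by
  split_ifs with hx
  · simp [hx]
  · obtain ⟨i, hi⟩ := Function.ne_iff.1 hx
    refine Finset.prod_eq_zero (Finset.mem_univ i) ?_
    rw [show x i = 0 by omega]
    rfl

theorem traceDist_tensPow_piM_ket1 (n : ℕ) {N : ℝ} (hN : 1 ≤ N) :
    traceDist (tensPow (piM N) n) (tensPow ket1 n) = 1 - (1 / N) ^ n := by
  have hs : 1 / N ≤ 1 := by rw [div_le_one (by linarith)]; exact hN
  have hv : ∀ j, 0 ≤ (![1 - 1 / N, 1 / N] : Fin 2 → ℝ) j := by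
    intro j
    fin_cases j
    · exact sub_nonneg.2 hs
    · exact one_div_nonneg.2 (by linarith)
  have hsum : ∑ x : Fin n → Fin 2, ∏ i, (![1 - 1 / N, 1 / N] : Fin 2 → ℝ) (x i) = 1 := by
    rw [← Fintype.sum_pow, Fin.sum_univ_two]
    simp
  rw [piM_eq_diagonal_ofReal, ket1_eq_diagonal_ofReal, tensPow_diagonal_ofReal,
    tensPow_diagonal_ofReal, traceDist_diagonal_ofReal]
  simp only [prod_zero_one_eq_ite]
  rw [sum_abs_sub_ite_eq (fun x => Finset.prod_nonneg fun i _ => hv _) hsum]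
  simp

theorem piM_eq_add_smul (M : ℝ) :
    piM M = diagonal ![1, 0] + ((1 / M : ℝ) : ℂ) • diagonal ![-1, 1] := by
  ext i j
  fin_cases i <;> fin_cases j <;> simp [piM, sub_eq_add_neg]

theorem ket1_eq_piM_one : ket1 = piM 1 := by
  ext i j
  fin_cases i <;> fin_cases j <;> simp [ket1, piM]

theorem piM_apply_zero_zero (N : ℝ) : piM N 0 0 = 1 - ((1 / N : ℝ) : ℂ) := by
  simp [piM]

theorem piM_apply_one_one (N : ℝ) : piM N 1 1 = ((1 / N : ℝ) : ℂ) := by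
  simp [piM]

theorem tensPow_apply_cons_cons (A : Matrix (Fin 2) (Fin 2) ℂ) (m : ℕ) (a b : Fin 2) :
    tensPow A (m + 2) (Fin.cons a (Fin.cons b 0)) (Fin.cons a (Fin.cons b 0))
      = A a a * A b b * A 0 0 ^ m := by
  simp [tensPow, Fin.prod_univ_succ, mul_assoc]

theorem piM_eq_of_add_smul_eq_tensPow {m : ℕ}
    {A B : Matrix (Fin (m + 2) → Fin 2) (Fin (m + 2) → Fin 2) ℂ} {t₁ t₂ t₃ N₁ N₂ N₃ : ℝ}
    (h₁₂ : t₁ ≠ t₂) (h₁₃ : t₁ ≠ t₃) (h₂₃ : t₂ ≠ t₃) (hN₁ : N₁ ≠ 1) (hN₂ : N₂ ≠ 1)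
    (h₁ : A + (t₁ : ℂ) • B = tensPow (piM N₁) (m + 2))
    (h₂ : A + (t₂ : ℂ) • B = tensPow (piM N₂) (m + 2))
    (h₃ : A + (t₃ : ℂ) • B = tensPow (piM N₃) (m + 2)) :
    piM N₁ = piM N₂ := by
  set z : Fin 2 → Fin 2 → Fin (m + 2) → Fin 2 := fun a b => Fin.cons a (Fin.cons b 0)
  have entry : ∀ {t N : ℝ}, A + (t : ℂ) • B = tensPow (piM N) (m + 2) → ∀ a b,
      A (z a b) (z a b) + t * B (z a b) (z a b)
        = piM N a a * piM N b b * piM N 0 0 ^ m := by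
    intro t N h a b
    rw [← tensPow_apply_cons_cons, ← h]
    rfl
  have onCone : ∀ {t N : ℝ}, A + (t : ℂ) • B = tensPow (piM N) (m + 2) →
      (A (z 0 0) (z 0 0) + t * B (z 0 0) (z 0 0)) * (A (z 1 1) (z 1 1) + t * B (z 1 1) (z 1 1))
        = (A (z 1 0) (z 1 0) + t * B (z 1 0) (z 1 0)) ^ 2 := by
    intro t N h
    rw [entry h, entry h, entry h]
    ring
  have hcone := mul_eq_mul_of_affine_mul_eq_sq
    (a₀ := A (z 0 0) (z 0 0)) (a₁ := B (z 0 0) (z 0 0))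
    (b₀ := A (z 1 0) (z 1 0)) (b₁ := B (z 1 0) (z 1 0))
    (c₀ := A (z 1 1) (z 1 1)) (c₁ := B (z 1 1) (z 1 1))
    (Complex.ofReal_injective.ne h₁₂) (Complex.ofReal_injective.ne h₁₃)
    (Complex.ofReal_injective.ne h₂₃) (by
      rintro t (rfl | rfl | rfl)
      exacts [onCone h₁, onCone h₂, onCone h₃])
  have hcross :
      (A (z 0 0) (z 0 0) + t₁ * B (z 0 0) (z 0 0)) * (A (z 1 0) (z 1 0) + t₂ * B (z 1 0) (z 1 0))
        = (A (z 0 0) (z 0 0) + t₂ * B (z 0 0) (z 0 0))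
          * (A (z 1 0) (z 1 0) + t₁ * B (z 1 0) (z 1 0)) := by
    linear_combination ((t₂ : ℂ) - t₁) * hcone
  rw [entry h₁, entry h₁, entry h₂, entry h₂] at hcross
  simp only [piM_apply_zero_zero, piM_apply_one_one] at hcross
  set s₁ : ℂ := ((1 / N₁ : ℝ) : ℂ)
  set s₂ : ℂ := ((1 / N₂ : ℝ) : ℂ)
  have hq : ∀ {N : ℝ}, N ≠ 1 → 1 - ((1 / N : ℝ) : ℂ) ≠ 0 := fun {N} hN => sub_ne_zero.2 <| by
    exact_mod_cast (show (1 : ℝ) ≠ 1 / N by rw [one_div, ne_comm, ne_eq, inv_eq_one]; exact hN)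
  have key : (1 - s₁) ^ (m + 1) * (1 - s₂) ^ (m + 1) * (s₂ - s₁) = 0 := by
    linear_combination hcross
  have hs : s₁ = s₂ :=
    (sub_eq_zero.1 ((mul_eq_zero.1 key).resolve_left
      (mul_ne_zero (pow_ne_zero _ (hq hN₁)) (pow_ne_zero _ (hq hN₂))))).symm
  rw [piM_eq_add_smul, piM_eq_add_smul]
  exact congrArg (diagonal ![1, 0] + · • diagonal ![-1, 1]) hs

theorem stmt_18_general (n : ℕ) (hn : 2 ≤ n) (δ ε M : ℝ)
    (hε : ε ∈ Set.Ico (0:ℝ) (1/2)) (hM : 1 < M) :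
    ¬ ∃ L : Matrix (Fin 2) (Fin 2) ℂ →ₗ[ℂ]
        Matrix (Fin n → Fin 2) (Fin n → Fin 2) ℂ,
      traceDist (L ket1) (tensPow ket1 n) ≤ ε ∧
      ∀ M' : ℝ, M ≤ M' → ∃ M'' ∈ Set.Icc (2:ℝ) (2 + δ),
        L (piM M') = tensPow (piM M'') n := by
  rintro ⟨L, hdist, hG⟩
  obtain ⟨m, rfl⟩ : ∃ m, n = m + 2 := ⟨n - 2, by omega⟩
  obtain ⟨N₁, hN₁, hL₁⟩ := hG M le_rfl
  obtain ⟨N₂, hN₂, hL₂⟩ := hG (M + 1) (by linarith)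
  obtain ⟨N₃, -, hL₃⟩ := hG (M + 2) (by linarith)
  set D : Matrix (Fin 2) (Fin 2) ℂ := diagonal ![-1, 1]
  have hpencil : ∀ M', L (piM M') = L (diagonal ![1, 0]) + ((1 / M' : ℝ) : ℂ) • L D :=
    fun M' => by rw [piM_eq_add_smul, map_add, map_smul]
  have h₂₁ : 1 / (M + 1) < 1 / M := one_div_lt_one_div_of_lt (by linarith) (by linarith)
  have h₃₂ : 1 / (M + 2) < 1 / (M + 1) := one_div_lt_one_div_of_lt (by linarith) (by linarith)
  have hpiM : piM N₁ = piM N₂ := piM_eq_of_add_smul_eq_tensPow h₂₁.ne' (h₃₂.trans h₂₁).ne' h₃₂.ne'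
    (by linarith [hN₁.1]) (by linarith [hN₂.1])
    ((hpencil M).symm.trans hL₁) ((hpencil _).symm.trans hL₂) ((hpencil _).symm.trans hL₃)
  have hD : L D = 0 := by
    have h : ((1 / M : ℝ) : ℂ) • L D = ((1 / (M + 1) : ℝ) : ℂ) • L D :=
      add_left_cancel (by rw [← hpencil, ← hpencil, hL₁, hL₂, hpiM])
    rw [← sub_eq_zero, ← sub_smul, smul_eq_zero, sub_eq_zero, Complex.ofReal_inj] at h
    exact h.resolve_left h₂₁.ne'
  have hket : L ket1 = tensPow (piM N₁) (m + 2) := by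
    rw [ket1_eq_piM_one, hpencil, hD, smul_zero, ← hL₁, hpencil, hD, smul_zero]
  have hsmall : (1 / N₁) ^ (m + 2) ≤ 1 / 2 := by
    have hs : 1 / N₁ ≤ 1 / 2 := one_div_le_one_div_of_le two_pos hN₁.1
    refine (pow_le_of_le_one ?_ (hs.trans (by norm_num)) (by omega)).trans hs
    exact one_div_nonneg.2 (by linarith [hN₁.1])
  rw [hket, traceDist_tensPow_piM_ket1 _ (by linarith [hN₁.1])] at hdist
  linarith [hε.2]

/-- infinite work cost of forming `n ≥ 2` copies of the uncertain
excited battery from a dirty battery, even under Gibbs-preserving linear maps. -/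
theorem stmt_18 (n : ℕ) (hn : 2 ≤ n) (δ ε M : ℝ) (hδ : 0 < δ)
    (hε : ε ∈ Set.Ico (0:ℝ) (1/2)) (hM : 1 < M) :
    ¬ ∃ L : Matrix (Fin 2) (Fin 2) ℂ →ₗ[ℂ]
        Matrix (Fin n → Fin 2) (Fin n → Fin 2) ℂ,
      traceDist (L ket1) (tensPow ket1 n) ≤ ε ∧
      ∀ M' : ℝ, M ≤ M' → ∃ M'' ∈ Set.Icc (2:ℝ) (2 + δ),
        L (piM M') = tensPow (piM M'') n :=
  stmt_18_general n hn δ ε M hε hM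
end
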